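/- arXiv:2111.08579 — 2 statements merged into one kernel-verified Lean document; each statement's English description precedes it below -/
import Mathlib

section
/- For every X in the Orlicz heart H^{Φ*}, the divergence risk measure satisfies the optimized-certainty-equivalent representation ρ^Φ(X) = inf_{x∈ℝ} E[Φ*(X + x) − x]. -/
/-!
Weak duality is the Fenchel–Young inequality `z y ≤ Φ(z) + Φ*(y)` at `z = dℙ̄/dℙ`, `y = X + x`,
integrated against `ℙ`. Conversely, `x ↦ E[Φ*(X + x)] - x` is convex and coercive, so it has a
minimiser `x`, and differentiating under the integral there gives
`E[Φ*'₋(X + x)] ≤ 1 ≤ E[Φ*'₊(X + x)]`. A convex combination `Z` of the two one-sided derivatives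
is then a subgradient of `Φ*` at `X + x` with `E[Z] = 1`. For the measure with density `Z`,
Fenchel–Moreau (this is where lower semicontinuity of `Φ` enters) makes every Fenchel–Young
inequality an equality, so the supremum is attained and equals the infimum.
-/

open MeasureTheory Filter Topology Set
open scoped ENNReal NNReal

noncomputable section

/-- The Fenchel–Legendre transform `Φ*` of `Φ`, as a real-valued function on `ℝ`:
`Φ*(y) = sup_{x ≥ 0} (x * y - Φ(x))` (points where `Φ x = ∞` contribute `-∞` and are
therefore omitted from the supremum). -/
def legendre (Φ : ℝ → ℝ≥0∞) (y : ℝ) : ℝ :=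
  sSup {s : ℝ | ∃ x : ℝ, 0 ≤ x ∧ Φ x ≠ ⊤ ∧ s = x * y - (Φ x).toReal}

/-- Standing assumptions on `Φ : [0,∞) → [0,∞]`: lower semicontinuity, convexity,
`Φ(0) < ∞`, `Φ(x₀) < ∞` for some `x₀ > 1`, `inf_{x ≥ 0} Φ(x) = 0`, and the superlinear
growth condition `Φ(x)/x → ∞`. -/
structure PhiAssumptions (Φ : ℝ → ℝ≥0∞) : Prop where
  lsc : LowerSemicontinuousOn Φ (Set.Ici 0)
  convex : ∀ x ∈ Set.Ici (0:ℝ), ∀ y ∈ Set.Ici (0:ℝ), ∀ u v : ℝ, 0 ≤ u → 0 ≤ v →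
    u + v = 1 → Φ (u * x + v * y) ≤ ENNReal.ofReal u * Φ x + ENNReal.ofReal v * Φ y
  finite_zero : Φ 0 ≠ ⊤
  finite_gt_one : ∃ x₀ : ℝ, 1 < x₀ ∧ Φ x₀ ≠ ⊤
  inf_eq_zero : (⨅ x : {x : ℝ // 0 ≤ x}, Φ x.1) = 0
  superlinear : Tendsto (fun x : ℝ => Φ x / ENNReal.ofReal x) atTop (𝓝 ⊤)

/-- The divergence risk measure `ρ^Φ(X) = sup_{ℙ̄ ∈ 𝒫_Φ} (E_{ℙ̄}[X] - E[Φ(dℙ̄/dℙ)])`,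
where `𝒫_Φ` is the set of probability measures absolutely continuous w.r.t. `P` whose
density has `P`-integrable `Φ`-divergence. -/
def divergenceRisk {Ω : Type*} [MeasurableSpace Ω] (P : Measure Ω) (Φ : ℝ → ℝ≥0∞)
    (X : Ω → ℝ) : ℝ :=
  sSup {s : ℝ | ∃ Q : Measure Ω, IsProbabilityMeasure Q ∧ Q ≪ P ∧
    (∫⁻ ω, Φ ((Q.rnDeriv P ω).toReal) ∂P) ≠ ⊤ ∧
    s = (∫ ω, X ω ∂Q) - (∫⁻ ω, Φ ((Q.rnDeriv P ω).toReal) ∂P).toReal}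

section

variable {Ω : Type*} [MeasurableSpace Ω] {P : Measure Ω} {f : ℝ → ℝ} {Y : Ω → ℝ}

lemma integrable_slope_add (hint : ∀ c, Integrable (fun ω => f (Y ω + c)) P) (t : ℝ) :
    Integrable (fun ω => slope f (Y ω) (Y ω + t)) P := by
  simp_rw [slope_def_field, add_sub_cancel_left]
  exact ((hint t).sub (by simpa using hint 0)).div_const t

lemma integral_slope_add (hint : ∀ c, Integrable (fun ω => f (Y ω + c)) P) (t : ℝ) :
    ∫ ω, slope f (Y ω) (Y ω + t) ∂P = ((∫ ω, f (Y ω + t) ∂P) - ∫ ω, f (Y ω) ∂P) / t := by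
  simp_rw [slope_def_field, add_sub_cancel_left]
  rw [integral_div, integral_sub (hint t) (by simpa using hint 0)]

end

namespace ConvexOn

variable {f : ℝ → ℝ} (hf : ConvexOn ℝ univ f)
include hf

lemma rightDeriv_le_sub (y : ℝ) : derivWithin f (Ioi y) y ≤ f (y + 1) - f y := by
  simpa [slope_def_field] using
    hf.rightDeriv_le_slope_of_mem_interior (by simp) (mem_univ (y + 1)) (lt_add_one y)

lemma sub_le_leftDeriv (y : ℝ) : f y - f (y - 1) ≤ derivWithin f (Iio y) y := by
  simpa [slope_def_field] using
    hf.slope_le_leftDeriv_of_mem_interior (mem_univ (y - 1)) (by simp) (sub_one_lt y)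

lemma add_mul_sub_le_of_leftDeriv_le_of_le_rightDeriv {y z : ℝ}
    (hl : derivWithin f (Iio y) y ≤ z) (hr : z ≤ derivWithin f (Ioi y) y) (w : ℝ) :
    f y + z * (w - y) ≤ f w := by
  rcases lt_trichotomy w y with hw | rfl | hw
  · have := (hf.slope_le_leftDeriv_of_mem_interior (mem_univ w) (by simp) hw).trans hl
    rw [slope_def_field, div_le_iff₀ (sub_pos.mpr hw)] at this
    linarith
  · simp
  · have := hr.trans (hf.rightDeriv_le_slope_of_mem_interior (by simp) (mem_univ w) hw)
    rw [slope_def_field, le_div_iff₀ (sub_pos.mpr hw)] at this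
    linarith

lemma add_convexComb_deriv_mul_sub_le {u v : ℝ} (hu : 0 ≤ u) (hv : 0 ≤ v) (huv : u + v = 1)
    (y w : ℝ) :
    f y + (u * derivWithin f (Iio y) y + v * derivWithin f (Ioi y) y) * (w - y) ≤ f w := by
  have hlr := hf.leftDeriv_le_rightDeriv_of_mem_interior (x := y) (by simp)
  refine hf.add_mul_sub_le_of_leftDeriv_le_of_le_rightDeriv ?_ ?_ w
  · linear_combination mul_le_mul_of_nonneg_left hlr hv - derivWithin f (Iio y) y * huv
  · linear_combination mul_le_mul_of_nonneg_left hlr hu + derivWithin f (Ioi y) y * huv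

lemma leftDeriv_nonneg_of_monotone (hmono : Monotone f) (y : ℝ) :
    0 ≤ derivWithin f (Iio y) y :=
  (sub_nonneg.mpr (hmono (sub_le_self y zero_le_one))).trans (hf.sub_le_leftDeriv y)

lemma monotone_rightDeriv : Monotone fun y => derivWithin f (Ioi y) y := by
  simpa using hf.monotoneOn_rightDeriv

lemma monotone_leftDeriv : Monotone fun y => derivWithin f (Iio y) y := by
  simpa using hf.monotoneOn_leftDeriv

lemma antitone_slope_add_one_div (y : ℝ) :
    Antitone fun n : ℕ => slope f y (y + 1 / (n + 1)) := fun n m hnm =>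
  hf.slope_mono (mem_univ y) (by simp; positivity) (by simp; positivity)
    (by simpa using Nat.one_div_le_one_div (α := ℝ) hnm)

lemma monotone_slope_sub_one_div (y : ℝ) :
    Monotone fun n : ℕ => slope f y (y - 1 / (n + 1)) := fun n m hnm =>
  hf.slope_mono (mem_univ y) (by simp; positivity) (by simp; positivity)
    (sub_le_sub_left (Nat.one_div_le_one_div hnm) y)

lemma tendsto_slope_add_one_div (y : ℝ) :
    Tendsto (fun n : ℕ => slope f y (y + 1 / (n + 1))) atTop (𝓝 (derivWithin f (Ioi y) y)) := by
  have hderiv := (hasDerivWithinAt_iff_tendsto_slope' self_notMem_Ioi).mp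
    (hf.hasDerivWithinAt_rightDeriv_of_mem_interior (by simp : y ∈ interior univ))
  refine hderiv.comp (tendsto_nhdsWithin_iff.mpr ⟨?_, Eventually.of_forall fun n => ?_⟩)
  · simpa using tendsto_const_nhds.add (tendsto_one_div_add_atTop_nhds_zero_nat (𝕜 := ℝ))
  · simp only [mem_Ioi, lt_add_iff_pos_right]
    positivity

lemma tendsto_slope_sub_one_div (y : ℝ) :
    Tendsto (fun n : ℕ => slope f y (y - 1 / (n + 1))) atTop (𝓝 (derivWithin f (Iio y) y)) := by
  have hderiv := (hasDerivWithinAt_iff_tendsto_slope' self_notMem_Iio).mp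
    (hf.hasDerivWithinAt_leftDeriv_of_mem_interior (by simp : y ∈ interior univ))
  refine hderiv.comp (tendsto_nhdsWithin_iff.mpr ⟨?_, Eventually.of_forall fun n => ?_⟩)
  · simpa using tendsto_const_nhds.sub (tendsto_one_div_add_atTop_nhds_zero_nat (𝕜 := ℝ))
  · simp only [mem_Iio, sub_lt_self_iff]
    positivity

section

variable {Ω : Type*} [MeasurableSpace Ω] {P : Measure Ω} {Y : Ω → ℝ} (hY : Measurable Y)
  (hint : ∀ c, Integrable (fun ω => f (Y ω + c)) P)
include hY hint

lemma integrable_rightDeriv_comp : Integrable (fun ω => derivWithin f (Ioi (Y ω)) (Y ω)) P := by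
  refine integrable_of_le_of_le (hf.monotone_rightDeriv.measurable.comp hY).aestronglyMeasurable
    (ae_of_all _ fun ω => (hf.sub_le_leftDeriv (Y ω)).trans
      (hf.leftDeriv_le_rightDeriv_of_mem_interior (by simp)))
    (ae_of_all _ fun ω => hf.rightDeriv_le_sub (Y ω)) ?_ ?_
  · exact ((hint 0).sub (hint (-1))).congr (ae_of_all _ fun ω => by simp [sub_eq_add_neg])
  · exact ((hint 1).sub (hint 0)).congr (ae_of_all _ fun ω => by simp)

lemma integrable_leftDeriv_comp : Integrable (fun ω => derivWithin f (Iio (Y ω)) (Y ω)) P := by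
  refine integrable_of_le_of_le (hf.monotone_leftDeriv.measurable.comp hY).aestronglyMeasurable
    (ae_of_all _ fun ω => hf.sub_le_leftDeriv (Y ω))
    (ae_of_all _ fun ω => (hf.leftDeriv_le_rightDeriv_of_mem_interior (by simp)).trans
      (hf.rightDeriv_le_sub (Y ω))) ?_ ?_
  · exact ((hint 0).sub (hint (-1))).congr (ae_of_all _ fun ω => by simp [sub_eq_add_neg])
  · exact ((hint 1).sub (hint 0)).congr (ae_of_all _ fun ω => by simp)

/-- The difference quotients decrease to the right derivative, so monotone convergence applies. -/
lemma le_integral_rightDeriv_comp {a : ℝ}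
    (hmin : ∀ x, ∫ ω, f (Y ω) ∂P ≤ (∫ ω, f (Y ω + x) ∂P) - a * x) :
    a ≤ ∫ ω, derivWithin f (Ioi (Y ω)) (Y ω) ∂P := by
  refine ge_of_tendsto' (integral_tendsto_of_tendsto_of_antitone
    (fun n => integrable_slope_add hint _) (hf.integrable_rightDeriv_comp hY hint)
    (ae_of_all _ fun ω => hf.antitone_slope_add_one_div (Y ω))
    (ae_of_all _ fun ω => hf.tendsto_slope_add_one_div (Y ω))) fun n => ?_
  rw [integral_slope_add hint, le_div_iff₀ Nat.one_div_pos_of_nat]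
  linarith [hmin (1 / (n + 1))]

lemma integral_leftDeriv_comp_le {a : ℝ}
    (hmin : ∀ x, ∫ ω, f (Y ω) ∂P ≤ (∫ ω, f (Y ω + x) ∂P) - a * x) :
    ∫ ω, derivWithin f (Iio (Y ω)) (Y ω) ∂P ≤ a := by
  refine le_of_tendsto' (integral_tendsto_of_tendsto_of_monotone
    (fun n => by simpa [sub_eq_add_neg] using integrable_slope_add hint (-(1 / (n + 1))))
    (hf.integrable_leftDeriv_comp hY hint)
    (ae_of_all _ fun ω => hf.monotone_slope_sub_one_div (Y ω))
    (ae_of_all _ fun ω => hf.tendsto_slope_sub_one_div (Y ω))) fun n => ?_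
  simp_rw [sub_eq_add_neg]
  rw [integral_slope_add hint, div_le_iff_of_neg (neg_lt_zero.mpr Nat.one_div_pos_of_nat)]
  linarith [hmin (-(1 / (n + 1)))]

end

end ConvexOn

lemma exists_isProbabilityMeasure_rnDeriv_eq {Ω : Type*} [MeasurableSpace Ω] {P : Measure Ω}
    [SigmaFinite P] {Z : Ω → ℝ} (hZm : Measurable Z) (hZnn : ∀ ω, 0 ≤ Z ω)
    (hZint : Integrable Z P) (hZ1 : ∫ ω, Z ω ∂P = 1) :
    ∃ Q : Measure Ω, IsProbabilityMeasure Q ∧ Q ≪ P ∧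
      (fun ω => (Q.rnDeriv P ω).toReal) =ᵐ[P] Z := by
  refine ⟨P.withDensity fun ω => ENNReal.ofReal (Z ω), ⟨?_⟩, withDensity_absolutelyContinuous _ _,
    ?_⟩
  · rw [withDensity_apply _ MeasurableSet.univ, setLIntegral_univ,
      ← ofReal_integral_eq_lintegral_ofReal hZint (ae_of_all _ hZnn), hZ1, ENNReal.ofReal_one]
  · filter_upwards [Measure.rnDeriv_withDensity P hZm.ennreal_ofReal] with ω hω
    rw [hω, ENNReal.toReal_ofReal (hZnn ω)]

def oceObjective {Ω : Type*} [MeasurableSpace Ω] (P : Measure Ω) (Φ : ℝ → ℝ≥0∞) (X : Ω → ℝ)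
    (x : ℝ) : ℝ :=
  (∫ ω, legendre Φ (X ω + x) ∂P) - x

namespace PhiAssumptions

variable {Φ : ℝ → ℝ≥0∞} (hΦ : PhiAssumptions Φ)
include hΦ

lemma eventually_mul_le_toReal (c : ℝ) :
    ∀ᶠ x in atTop, Φ x ≠ ⊤ → c * x ≤ (Φ x).toReal := by
  filter_upwards [hΦ.superlinear.eventually (lt_mem_nhds (ENNReal.ofReal_lt_top (r := c))),
    eventually_gt_atTop 0] with x hx hx0 hfin
  rw [ENNReal.lt_div_iff_mul_lt (by simp [hx0]) (by simp), ← ENNReal.ofReal_mul' hx0.le] at hx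
  exact (ENNReal.ofReal_le_iff_le_toReal hfin).mp hx.le

lemma bddAbove_legendre_set (y : ℝ) :
    BddAbove {s : ℝ | ∃ x : ℝ, 0 ≤ x ∧ Φ x ≠ ⊤ ∧ s = x * y - (Φ x).toReal} := by
  obtain ⟨M, hM⟩ := eventually_atTop.mp (hΦ.eventually_mul_le_toReal |y|)
  refine ⟨max M 0 * |y|, ?_⟩
  rintro _ ⟨x, hx, hfin, rfl⟩
  have hxy : x * y ≤ x * |y| := mul_le_mul_of_nonneg_left (le_abs_self y) hx
  rcases le_total x (max M 0) with hxM | hxM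
  · nlinarith [abs_nonneg y, (Φ x).toReal_nonneg]
  · nlinarith [mul_nonneg (le_max_right M 0) (abs_nonneg y),
      hM x ((le_max_left M 0).trans hxM) hfin]

lemma le_legendre {x : ℝ} (hx : 0 ≤ x) (hfin : Φ x ≠ ⊤) (y : ℝ) :
    x * y - (Φ x).toReal ≤ legendre Φ y :=
  le_csSup (hΦ.bddAbove_legendre_set y) ⟨x, hx, hfin, rfl⟩

lemma legendre_le {y c : ℝ} (h : ∀ x, 0 ≤ x → Φ x ≠ ⊤ → x * y - (Φ x).toReal ≤ c) :
    legendre Φ y ≤ c :=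
  csSup_le ⟨_, 0, le_rfl, hΦ.finite_zero, rfl⟩ fun _ ⟨x, hx, hfin, hs⟩ => hs ▸ h x hx hfin

lemma neg_toReal_le_legendre (y : ℝ) : -(Φ 0).toReal ≤ legendre Φ y := by
  simpa using hΦ.le_legendre le_rfl hΦ.finite_zero y

lemma monotone_legendre : Monotone (legendre Φ) := fun _ y' h =>
  hΦ.legendre_le fun _ hx hfin =>
    (sub_le_sub_right (mul_le_mul_of_nonneg_left h hx) _).trans (hΦ.le_legendre hx hfin y')

lemma convexOn_legendre : ConvexOn ℝ univ (legendre Φ) := by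
  refine ⟨convex_univ, fun y₁ _ y₂ _ u v hu hv huv => hΦ.legendre_le fun x hx hfin => ?_⟩
  have h₁ := mul_le_mul_of_nonneg_left (hΦ.le_legendre hx hfin y₁) hu
  have h₂ := mul_le_mul_of_nonneg_left (hΦ.le_legendre hx hfin y₂) hv
  simp only [smul_eq_mul]
  linear_combination h₁ + h₂ + (Φ x).toReal * huv

lemma le_ofReal_add_mul {x y u v : ℝ} (hx : 0 ≤ x) (hy : 0 ≤ y) (hxf : Φ x ≠ ⊤)
    (hyf : Φ y ≠ ⊤) (hu : 0 ≤ u) (hv : 0 ≤ v) (huv : u + v = 1) :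
    Φ (u * x + v * y) ≤ ENNReal.ofReal (u * (Φ x).toReal + v * (Φ y).toReal) := by
  rw [ENNReal.ofReal_add (by positivity) (by positivity), ENNReal.ofReal_mul hu,
    ENNReal.ofReal_mul hv, ENNReal.ofReal_toReal hxf, ENNReal.ofReal_toReal hyf]
  exact hΦ.convex x hx y hy u v hu hv huv

lemma slope_left_le_slope_right {x z x' r : ℝ} (hx : 0 ≤ x) (hxz : x < z) (hzx' : z < x')
    (hxf : Φ x ≠ ⊤) (hx'f : Φ x' ≠ ⊤) (hr : Φ z = ⊤ ∨ r < (Φ z).toReal) :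
    (r - (Φ x).toReal) / (z - x) ≤ ((Φ x').toReal - r) / (x' - z) := by
  have hxx' : 0 < x' - x := by linarith
  have hcomb : (x' - z) / (x' - x) * x + (z - x) / (x' - x) * x' = z := by
    field_simp; ring
  have hle := hΦ.le_ofReal_add_mul hx (hx.trans (hxz.trans hzx').le) hxf hx'f
    (u := (x' - z) / (x' - x)) (v := (z - x) / (x' - x)) (by bound) (by bound)
    (by field_simp; ring)
  rw [hcomb] at hle
  have hzf : Φ z ≠ ⊤ := ne_top_of_le_ne_top ENNReal.ofReal_ne_top hle
  have hφz := ENNReal.toReal_le_of_le_ofReal (by bound) hle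
  have hr' := hr.resolve_left hzf
  rw [div_le_div_iff₀ (by linarith) (by linarith)]
  rw [div_mul_eq_mul_div, div_mul_eq_mul_div, ← add_div, le_div_iff₀ hxx'] at hφz
  nlinarith

lemma exists_pos_forall_le_toReal {z r : ℝ} (hz : 0 ≤ z) (hr : Φ z = ⊤ ∨ r < (Φ z).toReal) :
    ∃ δ > 0, ∀ x, 0 ≤ x → Φ x ≠ ⊤ → |x - z| < δ → r ≤ (Φ x).toReal := by
  rcases le_or_gt r 0 with hr0 | hr0
  · exact ⟨1, one_pos, fun x _ _ _ => hr0.trans ENNReal.toReal_nonneg⟩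
  have hlt : ENNReal.ofReal r < Φ z := by
    rcases hr with h | h
    · simp [h]
    · exact (ENNReal.ofReal_lt_iff_lt_toReal hr0.le fun htop => by simp [htop] at h; linarith).mpr h
  obtain ⟨δ, hδ, hball⟩ := Metric.mem_nhdsWithin_iff.mp (hΦ.lsc z hz _ hlt)
  refine ⟨δ, hδ, fun x hx hfin hxz => ?_⟩
  exact ((ENNReal.ofReal_lt_iff_lt_toReal hr0.le hfin).mp (hball ⟨by simpa [Real.dist_eq], hx⟩)).le

/-- The slope `w` is squeezed between the slopes from `(z, r)` to the graph of `Φ` on the left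
and on the right of `z`; lower semicontinuity at `z` keeps these slopes bounded. -/
lemma exists_affine_minorant {z r : ℝ} (hz : 0 ≤ z) (hr : Φ z = ⊤ ∨ r < (Φ z).toReal) :
    ∃ w : ℝ, ∀ x, 0 ≤ x → Φ x ≠ ⊤ → r + w * (x - z) ≤ (Φ x).toReal := by
  obtain ⟨δ, hδ, hnear⟩ := hΦ.exists_pos_forall_le_toReal hz hr
  set M := |r| / δ
  set A := (fun x => (r - (Φ x).toReal) / (z - x)) '' {x | 0 ≤ x ∧ Φ x ≠ ⊤ ∧ x < z}
  set B := (fun x => ((Φ x).toReal - r) / (x - z)) '' {x | 0 ≤ x ∧ Φ x ≠ ⊤ ∧ z < x}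
  have hA : ∀ a ∈ A, a ≤ M := by
    rintro _ ⟨x, ⟨hx, hfin, hxz⟩, rfl⟩
    rcases lt_or_ge (z - x) δ with hlt | hge
    · have := hnear x hx hfin (by rw [abs_sub_comm, abs_of_pos (sub_pos.mpr hxz)]; exact hlt)
      exact (div_nonpos_of_nonpos_of_nonneg (by linarith) (by linarith)).trans (by positivity)
    · calc (r - (Φ x).toReal) / (z - x) ≤ |r| / (z - x) := by
            gcongr
            linarith [le_abs_self r, (Φ x).toReal_nonneg]
        _ ≤ M := div_le_div_of_nonneg_left (abs_nonneg r) hδ hge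
  have hB : ∀ b ∈ B, -M ≤ b := by
    rintro _ ⟨x, ⟨hx, hfin, hzx⟩, rfl⟩
    rcases lt_or_ge (x - z) δ with hlt | hge
    · have := hnear x hx hfin (by rw [abs_of_pos (sub_pos.mpr hzx)]; exact hlt)
      exact (neg_nonpos.mpr (by positivity)).trans (div_nonneg (by linarith) (by linarith))
    · calc -M ≤ -|r| / (x - z) := by
            rw [neg_div, neg_le_neg_iff]
            exact div_le_div_of_nonneg_left (abs_nonneg r) hδ hge
        _ ≤ ((Φ x).toReal - r) / (x - z) := by
            gcongr
            linarith [le_abs_self r, (Φ x).toReal_nonneg]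
  obtain ⟨w, hwA, hwB⟩ := exists_between_of_forall_le (s := insert (-M) A) (t := insert M B)
    (insert_nonempty _ _) (insert_nonempty _ _) (by
      rintro a (rfl | ha) b (rfl | hb)
      · linarith [show 0 ≤ M by positivity]
      · exact hB b hb
      · exact hA a ha
      · obtain ⟨x, ⟨hx, hxf, hxz⟩, rfl⟩ := ha
        obtain ⟨x', ⟨-, hx'f, hzx'⟩, rfl⟩ := hb
        exact hΦ.slope_left_le_slope_right hx hxz hzx' hxf hx'f hr)
  refine ⟨w, fun x hx hfin => ?_⟩
  rcases lt_trichotomy x z with hxz | rfl | hzx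
  · have := hwA (mem_insert_of_mem _ ⟨x, ⟨hx, hfin, hxz⟩, rfl⟩)
    rw [div_le_iff₀ (sub_pos.mpr hxz)] at this
    linarith
  · simpa using (hr.resolve_left hfin).le
  · have := hwB (mem_insert_of_mem _ ⟨x, ⟨hx, hfin, hzx⟩, rfl⟩)
    rw [le_div_iff₀ (sub_pos.mpr hzx)] at this
    linarith

/-- Fenchel–Moreau at a subgradient of `Φ*`, by testing the subgradient inequality against the
affine minorants of `Φ`. -/
lemma toReal_eq_of_subgradient {z y : ℝ} (hz : 0 ≤ z)
    (hsub : ∀ w, legendre Φ y + z * (w - y) ≤ legendre Φ w) :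
    Φ z ≠ ⊤ ∧ (Φ z).toReal = z * y - legendre Φ y := by
  have key : ∀ r, (Φ z = ⊤ ∨ r < (Φ z).toReal) → r ≤ z * y - legendre Φ y := by
    intro r hr
    obtain ⟨w, hw⟩ := hΦ.exists_affine_minorant hz hr
    have hψw : legendre Φ w ≤ z * w - r :=
      hΦ.legendre_le fun x hx hfin => by nlinarith [hw x hx hfin]
    linarith [hsub w]
  have hfin : Φ z ≠ ⊤ := fun htop => by
    linarith [key (z * y - legendre Φ y + 1) (Or.inl htop)]
  refine ⟨hfin, le_antisymm (le_of_not_gt fun hlt => ?_) ?_⟩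
  · linarith [key ((z * y - legendre Φ y + (Φ z).toReal) / 2) (Or.inr (by linarith))]
  · linarith [hΦ.le_legendre hz hfin y]

lemma measurable_comp_max_zero : Measurable fun x => Φ (max x 0) :=
  (lowerSemicontinuousOn_univ_iff.mp <| hΦ.lsc.comp
    (continuous_id.max continuous_const).continuousOn fun x _ => le_max_right x 0).measurable

section

variable {Ω : Type*} [MeasurableSpace Ω] {P : Measure Ω} [IsProbabilityMeasure P] {X : Ω → ℝ}
  (hX : Measurable X) (hXΦ : ∀ c : ℝ, 0 < c → Integrable (fun ω => legendre Φ (c * |X ω|)) P)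
include hX hXΦ

lemma integrable_legendre_mul_add {a : ℝ} (ha : 0 < a) (c : ℝ) :
    Integrable (fun ω => legendre Φ (a * X ω + c)) P := by
  refine integrable_of_le_of_le
    ((hΦ.monotone_legendre.measurable.comp ((hX.const_mul a).add_const c)).aestronglyMeasurable)
    (ae_of_all _ fun ω => hΦ.neg_toReal_le_legendre _)
    (ae_of_all _ fun ω => ?_) (integrable_const _)
    (((hXΦ (2 * a) (by positivity)).add (integrable_const (legendre Φ (2 * |c|)))).div_const 2)
  have hmono : legendre Φ (a * X ω + c) ≤ legendre Φ (2⁻¹ * (2 * a * |X ω|) + 2⁻¹ * (2 * |c|)) :=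
    hΦ.monotone_legendre (by nlinarith [le_abs_self (X ω), le_abs_self c])
  have hconv := hΦ.convexOn_legendre.2 (mem_univ (2 * a * |X ω|)) (mem_univ (2 * |c|))
    (by norm_num : (0 : ℝ) ≤ 2⁻¹) (by norm_num : (0 : ℝ) ≤ 2⁻¹) (by norm_num)
  simp only [smul_eq_mul] at hconv
  simp only [Pi.add_apply]
  linarith

lemma integrable_legendre_add (c : ℝ) : Integrable (fun ω => legendre Φ (X ω + c)) P := by
  simpa using hΦ.integrable_legendre_mul_add hX hXΦ one_pos c

lemma integrable_of_integrable_legendre : Integrable X P := by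
  obtain ⟨x₀, hx₀, hx₀f⟩ := hΦ.finite_gt_one
  refine Integrable.mono' (((hXΦ 1 one_pos).add (integrable_const (Φ x₀).toReal)).div_const x₀)
    hX.aestronglyMeasurable (ae_of_all _ fun ω => ?_)
  have := hΦ.le_legendre (by linarith) hx₀f (1 * |X ω|)
  rw [Real.norm_eq_abs, Pi.add_apply, le_div_iff₀ (by linarith)]
  nlinarith [abs_nonneg (X ω)]

/-- Weak duality: the Fenchel–Young inequality at the density of `Q`, integrated. -/
lemma integral_sub_divergence_le_oceObjective {Q : Measure Ω} [IsProbabilityMeasure Q]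
    (hQP : Q ≪ P) (hfin : ∫⁻ ω, Φ ((Q.rnDeriv P ω).toReal) ∂P ≠ ⊤) (x : ℝ) :
    (∫ ω, X ω ∂Q) - (∫⁻ ω, Φ ((Q.rnDeriv P ω).toReal) ∂P).toReal ≤ oceObjective P Φ X x := by
  set W : Ω → ℝ := fun ω => (Q.rnDeriv P ω).toReal
  have hWm : Measurable W := (Q.measurable_rnDeriv P).ennreal_toReal
  have hΦW : Measurable fun ω => Φ (W ω) := by
    simpa [Function.comp_def, W] using hΦ.measurable_comp_max_zero.comp hWm
  have hΦWfin : ∀ᵐ ω ∂P, Φ (W ω) ≠ ⊤ := (ae_lt_top hΦW hfin).mono fun _ h => h.ne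
  have hΦWint : Integrable (fun ω => (Φ (W ω)).toReal) P :=
    integrable_toReal_of_lintegral_ne_top hΦW.aemeasurable hfin
  have hWXint : Integrable (fun ω => W ω * X ω) P := by
    refine Integrable.mono' (hΦWint.add (hXΦ 1 one_pos)) (hWm.mul hX).aestronglyMeasurable ?_
    filter_upwards [hΦWfin] with ω hω
    have := hΦ.le_legendre ENNReal.toReal_nonneg hω (1 * |X ω|)
    rw [Real.norm_eq_abs, abs_mul, abs_of_nonneg ENNReal.toReal_nonneg, Pi.add_apply]
    linarith
  have hWint : Integrable W P := Measure.integrable_toReal_rnDeriv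
  have hψint := hΦ.integrable_legendre_add hX hXΦ x
  have hpt : ∀ᵐ ω ∂P, W ω * X ω - (Φ (W ω)).toReal ≤ legendre Φ (X ω + x) - x * W ω := by
    filter_upwards [hΦWfin] with ω hω
    linarith [hΦ.le_legendre ENNReal.toReal_nonneg hω (X ω + x)]
  have hmono : ∫ ω, (W ω * X ω - (Φ (W ω)).toReal) ∂P
      ≤ ∫ ω, (legendre Φ (X ω + x) - x * W ω) ∂P :=
    integral_mono_ae (hWXint.sub hΦWint) (hψint.sub (hWint.const_mul x)) hpt
  rw [integral_sub hWXint hΦWint, integral_sub hψint (hWint.const_mul x), integral_const_mul,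
    Measure.integral_toReal_rnDeriv hQP, probReal_univ, mul_one,
    integral_toReal hΦW.aemeasurable (ae_lt_top hΦW hfin)] at hmono
  rw [← integral_rnDeriv_smul hQP]
  exact hmono

lemma mul_sub_le_oceObjective {z : ℝ} (hz : 0 ≤ z) (hfin : Φ z ≠ ⊤) (x : ℝ) :
    z * (∫ ω, X ω ∂P) - (Φ z).toReal + (z - 1) * x ≤ oceObjective P Φ X x := by
  have hXint := hΦ.integrable_of_integrable_legendre hX hXΦ
  have hint : Integrable (fun ω => z * (X ω + x)) P := (hXint.add (integrable_const x)).const_mul z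
  have : ∫ ω, (z * (X ω + x) - (Φ z).toReal) ∂P ≤ ∫ ω, legendre Φ (X ω + x) ∂P :=
    integral_mono (hint.sub (integrable_const _)) (hΦ.integrable_legendre_add hX hXΦ x)
      fun ω => hΦ.le_legendre hz hfin (X ω + x)
  rw [integral_sub hint (integrable_const _), integral_const_mul,
    integral_add hXint (integrable_const x)] at this
  simp only [integral_const, probReal_univ, one_smul] at this
  simp only [oceObjective]
  linarith

lemma convexOn_oceObjective : ConvexOn ℝ univ (oceObjective P Φ X) := by
  refine ⟨convex_univ, fun x₁ _ x₂ _ u v hu hv huv => ?_⟩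
  have hint := hΦ.integrable_legendre_add hX hXΦ
  have hpt : ∀ ω, legendre Φ (X ω + (u * x₁ + v * x₂))
      ≤ u * legendre Φ (X ω + x₁) + v * legendre Φ (X ω + x₂) := fun ω => by
    have := hΦ.convexOn_legendre.2 (mem_univ (X ω + x₁)) (mem_univ (X ω + x₂)) hu hv huv
    rwa [smul_eq_mul, smul_eq_mul, smul_eq_mul, smul_eq_mul,
      show u * (X ω + x₁) + v * (X ω + x₂) = X ω + (u * x₁ + v * x₂) by
        linear_combination X ω * huv] at this
  have : ∫ ω, legendre Φ (X ω + (u * x₁ + v * x₂)) ∂P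
      ≤ ∫ ω, (u * legendre Φ (X ω + x₁) + v * legendre Φ (X ω + x₂)) ∂P :=
    integral_mono (hint _) (((hint x₁).const_mul u).add ((hint x₂).const_mul v)) hpt
  rw [integral_add ((hint x₁).const_mul u) ((hint x₂).const_mul v), integral_const_mul,
    integral_const_mul] at this
  simp only [oceObjective, smul_eq_mul]
  linarith

lemma tendsto_oceObjective_cocompact : Tendsto (oceObjective P Φ X) (cocompact ℝ) atTop := by
  obtain ⟨x₀, hx₀, hx₀f⟩ := hΦ.finite_gt_one
  rw [cocompact_eq_atBot_atTop, tendsto_sup]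
  constructor
  · refine tendsto_atTop_mono (fun x => hΦ.mul_sub_le_oceObjective hX hXΦ le_rfl
      hΦ.finite_zero x) ?_
    exact tendsto_atTop_add_const_left _ _ (tendsto_neg_atBot_atTop.congr fun x => by ring)
  · refine tendsto_atTop_mono (fun x => hΦ.mul_sub_le_oceObjective hX hXΦ (by linarith)
      hx₀f x) ?_
    exact tendsto_atTop_add_const_left _ _ (tendsto_id.const_mul_atTop (by linarith))

lemma exists_forall_oceObjective_le : ∃ x₀, ∀ x, oceObjective P Φ X x₀ ≤ oceObjective P Φ X x :=
  have hcont := (hΦ.convexOn_oceObjective hX hXΦ).continuousOn isOpen_univ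
  (continuousOn_univ.mp hcont).exists_forall_le (hΦ.tendsto_oceObjective_cocompact hX hXΦ)

/-- At a minimiser `x`, the first-order condition puts `1` between the means of the one-sided
derivatives of `Φ*` at `X + x`; interpolate between them. -/
lemma exists_subgradient_integral_eq_one {x : ℝ}
    (hmin : ∀ x', oceObjective P Φ X x ≤ oceObjective P Φ X x') :
    ∃ Z : Ω → ℝ, Measurable Z ∧ Integrable Z P ∧ (∀ ω, 0 ≤ Z ω) ∧ ∫ ω, Z ω ∂P = 1 ∧
      ∀ ω w, legendre Φ (X ω + x) + Z ω * (w - (X ω + x)) ≤ legendre Φ w := by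
  have hψ := hΦ.convexOn_legendre
  have hY : Measurable fun ω => X ω + x := hX.add_const x
  have hint : ∀ c, Integrable (fun ω => legendre Φ (X ω + x + c)) P := fun c => by
    simpa [add_assoc] using hΦ.integrable_legendre_add hX hXΦ (x + c)
  have hmin' : ∀ c, ∫ ω, legendre Φ (X ω + x) ∂P
      ≤ (∫ ω, legendre Φ (X ω + x + c) ∂P) - 1 * c := fun c => by
    have := hmin (x + c)
    simp only [oceObjective, ← add_assoc] at this
    linarith
  set Dl := fun ω => derivWithin (legendre Φ) (Iio (X ω + x)) (X ω + x)
  set Dr := fun ω => derivWithin (legendre Φ) (Ioi (X ω + x)) (X ω + x)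
  have hlr : ∀ ω, Dl ω ≤ Dr ω := fun ω => hψ.leftDeriv_le_rightDeriv_of_mem_interior (by simp)
  have hl := hψ.integral_leftDeriv_comp_le hY hint hmin'
  have hr := hψ.le_integral_rightDeriv_comp hY hint hmin'
  obtain ⟨u, v, hu, hv, huv, hmean⟩ : (1 : ℝ) ∈ segment ℝ (∫ ω, Dl ω ∂P) (∫ ω, Dr ω ∂P) := by
    rw [segment_eq_Icc (hl.trans hr)]
    exact ⟨hl, hr⟩
  have hDl := hψ.integrable_leftDeriv_comp hY hint
  have hDr := hψ.integrable_rightDeriv_comp hY hint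
  refine ⟨fun ω => u * Dl ω + v * Dr ω,
    ((hψ.monotone_leftDeriv.measurable.comp hY).const_mul u).add
      ((hψ.monotone_rightDeriv.measurable.comp hY).const_mul v),
    (hDl.const_mul u).add (hDr.const_mul v), fun ω => ?_, ?_,
    fun ω => hψ.add_convexComb_deriv_mul_sub_le hu hv huv _⟩
  · have hDl0 := hψ.leftDeriv_nonneg_of_monotone hΦ.monotone_legendre (X ω + x)
    exact add_nonneg (mul_nonneg hu hDl0) (mul_nonneg hv (hDl0.trans (hlr ω)))
  · rw [integral_add (hDl.const_mul u) (hDr.const_mul v), integral_const_mul, integral_const_mul]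
    simpa using hmean

/-- At the measure with density `Z`, Fenchel–Moreau turns the Fenchel–Young inequalities of weak
duality into equalities. -/
lemma exists_integral_sub_divergence_eq_oceObjective {x : ℝ} {Z : Ω → ℝ} (hZm : Measurable Z)
    (hZint : Integrable Z P) (hZnn : ∀ ω, 0 ≤ Z ω) (hZ1 : ∫ ω, Z ω ∂P = 1)
    (hsub : ∀ ω w, legendre Φ (X ω + x) + Z ω * (w - (X ω + x)) ≤ legendre Φ w) :
    ∃ Q : Measure Ω, IsProbabilityMeasure Q ∧ Q ≪ P ∧
      (∫⁻ ω, Φ ((Q.rnDeriv P ω).toReal) ∂P) ≠ ⊤ ∧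
      (∫ ω, X ω ∂Q) - (∫⁻ ω, Φ ((Q.rnDeriv P ω).toReal) ∂P).toReal = oceObjective P Φ X x := by
  obtain ⟨Q, hQ, hQP, hrn⟩ := exists_isProbabilityMeasure_rnDeriv_eq hZm hZnn hZint hZ1
  set G : Ω → ℝ := fun ω => Z ω * (X ω + x) - legendre Φ (X ω + x)
  have hG : ∀ ω, Φ (Z ω) ≠ ⊤ ∧ (Φ (Z ω)).toReal = G ω :=
    fun ω => hΦ.toReal_eq_of_subgradient (hZnn ω) (hsub ω)
  have hGnn : ∀ ω, 0 ≤ G ω := fun ω => (hG ω).2 ▸ ENNReal.toReal_nonneg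
  have hψ := hΦ.integrable_legendre_add hX hXΦ x
  have hGint : Integrable G P := by
    refine integrable_of_le_of_le
      ((hZm.mul (hX.add_const x)).sub (hΦ.monotone_legendre.measurable.comp
        (hX.add_const x))).aestronglyMeasurable
      (ae_of_all _ hGnn) (ae_of_all _ fun ω => ?_) (integrable_zero _ _ P)
      ((hΦ.integrable_legendre_mul_add hX hXΦ two_pos (2 * x)).sub (hψ.const_mul 2))
    have h := hsub ω (2 * X ω + 2 * x)
    rw [show 2 * X ω + 2 * x - (X ω + x) = X ω + x by ring] at h
    simp only [G, Pi.sub_apply]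
    linarith
  have hlint : ∫⁻ ω, Φ ((Q.rnDeriv P ω).toReal) ∂P = ENNReal.ofReal (∫ ω, G ω ∂P) := by
    rw [ofReal_integral_eq_lintegral_ofReal hGint (ae_of_all _ hGnn)]
    refine lintegral_congr_ae (hrn.mono fun ω hω => ?_)
    dsimp only at hω ⊢
    rw [hω, ← (hG ω).2, ENNReal.ofReal_toReal (hG ω).1]
  have hZXint : Integrable (fun ω => Z ω * X ω) P :=
    ((hGint.add hψ).sub (hZint.const_mul x)).congr (ae_of_all _ fun ω => by simp [G]; ring)
  refine ⟨Q, hQ, hQP, hlint ▸ ENNReal.ofReal_ne_top, ?_⟩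
  rw [hlint, ENNReal.toReal_ofReal (integral_nonneg hGnn), ← integral_rnDeriv_smul hQP,
    integral_congr_ae (g := fun ω => Z ω * X ω) (hrn.mono fun ω hω => by
      dsimp only at hω ⊢; rw [smul_eq_mul, hω]), ← integral_sub hZXint hGint,
    integral_congr_ae (ae_of_all _ fun ω => show Z ω * X ω - G ω = legendre Φ (X ω + x) - x * Z ω by
      simp only [G]; ring), integral_sub hψ (hZint.const_mul x), integral_const_mul, hZ1, mul_one]
  rfl

end

end PhiAssumptions

theorem divergenceRisk_eq_optimizedCertaintyEquivalent_general
    {Ω : Type*} [MeasurableSpace Ω] (P : Measure Ω) [IsProbabilityMeasure P]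
    (Φ : ℝ → ℝ≥0∞) (hΦ : PhiAssumptions Φ)
    (X : Ω → ℝ) (hXmeas : Measurable X)
    (hXOrlicz : ∀ c : ℝ, 0 < c → Integrable (fun ω => legendre Φ (c * |X ω|)) P) :
    divergenceRisk P Φ X = ⨅ x : ℝ, ((∫ ω, legendre Φ (X ω + x) ∂P) - x) := by
  obtain ⟨x, hmin⟩ := hΦ.exists_forall_oceObjective_le hXmeas hXOrlicz
  obtain ⟨Z, hZm, hZint, hZnn, hZ1, hsub⟩ :=
    hΦ.exists_subgradient_integral_eq_one hXmeas hXOrlicz hmin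
  obtain ⟨Q, hQ, hQP, hfin, hQx⟩ := hΦ.exists_integral_sub_divergence_eq_oceObjective hXmeas
    hXOrlicz hZm hZint hZnn hZ1 hsub
  rw [divergenceRisk]
  refine (IsGreatest.csSup_eq (a := oceObjective P Φ X x) ?_).trans ?_
  · refine ⟨⟨Q, hQ, hQP, hfin, hQx.symm⟩, ?_⟩
    rintro _ ⟨Q', hQ', hQ'P, hfin', rfl⟩
    exact hΦ.integral_sub_divergence_le_oceObjective hXmeas hXOrlicz hQ'P hfin' x
  · exact le_antisymm (le_ciInf hmin) (ciInf_le ⟨_, forall_mem_range.mpr hmin⟩ x)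

/-- For every `X` in the Orlicz heart `H^{Φ*}`, the divergence risk measure
satisfies the optimized-certainty-equivalent representation
`ρ^Φ(X) = inf_{x ∈ ℝ} E[Φ*(X + x) - x]`. -/
theorem divergenceRisk_eq_optimizedCertaintyEquivalent
    {Ω : Type*} [MeasurableSpace Ω] (P : Measure Ω) [IsProbabilityMeasure P]
    (hAtomless : ∀ A : Set Ω, MeasurableSet A → P A ≠ 0 →
      ∃ B : Set Ω, B ⊆ A ∧ MeasurableSet B ∧ P B ≠ 0 ∧ P B ≠ P A)
    (Φ : ℝ → ℝ≥0∞) (hΦ : PhiAssumptions Φ)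
    (X : Ω → ℝ) (hXmeas : Measurable X)
    (hXOrlicz : ∀ c : ℝ, 0 < c → Integrable (fun ω => legendre Φ (c * |X ω|)) P) :
    divergenceRisk P Φ X = ⨅ x : ℝ, ((∫ ω, legendre Φ (X ω + x) ∂P) - x) :=
  divergenceRisk_eq_optimizedCertaintyEquivalent_general P Φ hΦ X hXmeas hXOrlicz
end
end

section
/- For every n ∈ ℕ and all y₁,…,y_n ∈ ℝ, the set of minimizers over x ∈ ℝ of the mapping x ↦ (1/n) Σ_{j=1}^n (Φ*(y_j + x) − x) is a nonvoid compact interval in ℝ. -/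
/-!
The superlinear growth of `Φ` makes the supremum defining `Φ*` finite, and as a supremum
of affine functions `Φ*` is convex. Its affine minorants `t ↦ -Φ(0)` and `t ↦ x₀ t - Φ(x₀)`,
with `x₀ > 1`, force each `x ↦ Φ*(y_j + x) - x` to tend to `+∞` as `x → ±∞`. The objective
is therefore a convex, coercive function on `ℝ`: it is continuous, attains its minimum, and
its set of minimizers is a sublevel set, which is convex, closed and bounded, i.e. a compact
interval.
-/

open MeasureTheory Filter Topology Set
open scoped ENNReal NNReal

noncomputable section

theorem tendsto_finset_sum_atTop {ι α M : Type*} [AddCommMonoid M] [Preorder M]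
    [IsOrderedAddMonoid M] {l : Filter α} {f : ι → α → M} {s : Finset ι}
    (hs : s.Nonempty) (h : ∀ i ∈ s, Tendsto (f i) l atTop) :
    Tendsto (fun x => ∑ i ∈ s, f i x) l atTop := by
  induction hs using Finset.Nonempty.cons_induction with
  | singleton i => simpa using h i (Finset.mem_singleton_self i)
  | cons i s _ _ ih =>
    simp only [Finset.sum_cons]
    exact (h i (Finset.mem_cons_self i s)).atTop_add_atTop
      (ih fun j hj => h j (Finset.mem_cons_of_mem hj))

theorem ConvexOn.sum {𝕜 E β ι : Type*} [Semiring 𝕜] [PartialOrder 𝕜] [AddCommMonoid E]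
    [AddCommMonoid β] [PartialOrder β] [IsOrderedAddMonoid β] [SMul 𝕜 E] [Module 𝕜 β]
    {s : Set E} {f : ι → E → β} {t : Finset ι} (hs : Convex 𝕜 s)
    (h : ∀ i ∈ t, ConvexOn 𝕜 s (f i)) : ConvexOn 𝕜 s (fun x => ∑ i ∈ t, f i x) := by
  induction t using Finset.cons_induction with
  | empty => simpa using convexOn_const (0 : β) hs
  | cons i t _ ih =>
    simp only [Finset.sum_cons]
    exact (h i (Finset.mem_cons_self i t)).add (ih fun j hj => h j (Finset.mem_cons_of_mem hj))

theorem Continuous.isCompact_preimage_Iic_of_tendsto_cocompact {β α : Type*}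
    [TopologicalSpace β] [LinearOrder α] [NoMaxOrder α] [TopologicalSpace α]
    [ClosedIicTopology α]
    {f : β → α} (hf : Continuous f) (hlim : Tendsto f (cocompact β) atTop) (c : α) :
    IsCompact (f ⁻¹' Iic c) := by
  obtain ⟨K, hK, hKc⟩ := mem_cocompact.1 (hlim.eventually_gt_atTop c)
  refine hK.of_isClosed_subset (isClosed_Iic.preimage hf) fun x hx => ?_
  by_contra hxK
  exact (hKc hxK).not_ge hx

theorem ConvexOn.exists_minimizers_eq_Icc {f : ℝ → ℝ} (hf : ConvexOn ℝ univ f)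
    (hlim : Tendsto f (cocompact ℝ) atTop) :
    ∃ c c' : ℝ, c ≤ c' ∧ {x | ∀ x', f x ≤ f x'} = Icc c c' := by
  have hcont : Continuous f := continuousOn_univ.1 (hf.continuousOn isOpen_univ)
  obtain ⟨z, hz⟩ := hcont.exists_forall_le hlim
  have hmin : {x | ∀ x', f x ≤ f x'} = {x | f x ≤ f z} :=
    Set.ext fun x => ⟨fun hx => hx z, fun hx x' => hx.trans (hz x')⟩
  have hconn : IsConnected {x | f x ≤ f z} :=
    ⟨⟨z, (le_rfl : f z ≤ f z)⟩, by simpa using (hf.convex_le (f z)).isPreconnected⟩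
  have hIcc := eq_Icc_of_connected_compact hconn
    (hcont.isCompact_preimage_Iic_of_tendsto_cocompact hlim (f z))
  refine ⟨_, _, nonempty_Icc.1 ?_, hmin.trans hIcc⟩
  exact hIcc ▸ hconn.nonempty

section Legendre

variable {Φ : ℝ → ℝ≥0∞}

theorem eventually_mul_le_toReal_of_superlinear
    (hsup : Tendsto (fun x : ℝ => Φ x / ENNReal.ofReal x) atTop (𝓝 ⊤)) (c : ℝ) :
    ∀ᶠ x in atTop, Φ x ≠ ⊤ → c * x ≤ (Φ x).toReal := by
  filter_upwards [hsup.eventually (eventually_gt_nhds (ENNReal.ofReal_lt_top (r := c))),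
    eventually_gt_atTop 0] with x hx hx0 hfin
  rw [← ENNReal.ofReal_toReal hfin, ← ENNReal.ofReal_div_of_pos hx0,
    ENNReal.ofReal_lt_ofReal_iff'] at hx
  exact ((lt_div_iff₀ hx0).1 hx.1).le

theorem bddAbove_legendre_set
    (hsup : Tendsto (fun x : ℝ => Φ x / ENNReal.ofReal x) atTop (𝓝 ⊤)) (y : ℝ) :
    BddAbove {s : ℝ | ∃ x : ℝ, 0 ≤ x ∧ Φ x ≠ ⊤ ∧ s = x * y - (Φ x).toReal} := by
  obtain ⟨M, hM⟩ := eventually_atTop.1 (eventually_mul_le_toReal_of_superlinear hsup y)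
  refine ⟨max M 0 * |y|, ?_⟩
  rintro _ ⟨x, hx, hfin, rfl⟩
  have hΦx : 0 ≤ (Φ x).toReal := ENNReal.toReal_nonneg
  rcases le_total M x with hMx | hxM
  · have := mul_nonneg (le_max_right M 0) (abs_nonneg y)
    linarith [hM x hMx hfin]
  · calc x * y - (Φ x).toReal ≤ x * |y| := by
          linarith [mul_le_mul_of_nonneg_left (le_abs_self y) hx]
      _ ≤ max M 0 * |y| := by gcongr; exact hxM.trans (le_max_left M 0)

theorem le_legendre (hsup : Tendsto (fun x : ℝ => Φ x / ENNReal.ofReal x) atTop (𝓝 ⊤))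
    {x : ℝ} (hx : 0 ≤ x) (hfin : Φ x ≠ ⊤) (y : ℝ) :
    x * y - (Φ x).toReal ≤ legendre Φ y :=
  le_csSup (bddAbove_legendre_set hsup y) ⟨x, hx, hfin, rfl⟩

theorem convexOn_legendre (h0 : Φ 0 ≠ ⊤)
    (hsup : Tendsto (fun x : ℝ => Φ x / ENNReal.ofReal x) atTop (𝓝 ⊤)) :
    ConvexOn ℝ univ (legendre Φ) := by
  refine ⟨convex_univ, fun y₁ _ y₂ _ u v hu hv huv => ?_⟩
  refine csSup_le ⟨_, 0, le_rfl, h0, rfl⟩ ?_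
  rintro _ ⟨x, hx, hfin, rfl⟩
  have h₁ := mul_le_mul_of_nonneg_left (le_legendre hsup hx hfin y₁) hu
  have h₂ := mul_le_mul_of_nonneg_left (le_legendre hsup hx hfin y₂) hv
  calc x * (u • y₁ + v • y₂) - (Φ x).toReal
      = u * (x * y₁ - (Φ x).toReal) + v * (x * y₂ - (Φ x).toReal) := by
        simp only [smul_eq_mul]
        linear_combination (Φ x).toReal * huv
    _ ≤ u • legendre Φ y₁ + v • legendre Φ y₂ := by
        simp only [smul_eq_mul]
        linarith

theorem convexOn_legendre_add_sub (h0 : Φ 0 ≠ ⊤)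
    (hsup : Tendsto (fun x : ℝ => Φ x / ENNReal.ofReal x) atTop (𝓝 ⊤)) (a : ℝ) :
    ConvexOn ℝ univ (fun x => legendre Φ (a + x) - x) :=
  ((convexOn_legendre h0 hsup).translate_right a).sub (concaveOn_id convex_univ)

theorem tendsto_legendre_add_sub_cocompact (hΦ : PhiAssumptions Φ) (a : ℝ) :
    Tendsto (fun x => legendre Φ (a + x) - x) (cocompact ℝ) atTop := by
  obtain ⟨x₀, hx₀, hfin⟩ := hΦ.finite_gt_one
  rw [cocompact_eq_atBot_atTop, tendsto_sup]
  constructor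
  · refine tendsto_atTop_mono (fun x => ?_)
      (tendsto_atTop_add_const_left _ (-(Φ 0).toReal) tendsto_neg_atBot_atTop)
    have := le_legendre hΦ.superlinear le_rfl hΦ.finite_zero (a + x)
    linarith
  · refine tendsto_atTop_mono (fun x => ?_) (tendsto_atTop_add_const_left _
      (x₀ * a - (Φ x₀).toReal) (tendsto_id.const_mul_atTop (sub_pos.2 hx₀)))
    have := le_legendre hΦ.superlinear (by linarith) hfin (a + x)
    simp only [id]
    linarith

end Legendre

/-- For every `n ≥ 1` and `y₁,…,y_n ∈ ℝ`, the set of minimizers of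
`x ↦ (1/n) ∑_j (Φ*(y_j + x) - x)` is a nonvoid compact interval. -/
theorem minimizers_nonvoid_compact_interval
    (Φ : ℝ → ℝ≥0∞) (hΦ : PhiAssumptions Φ)
    (n : ℕ) (hn : 0 < n) (y : Fin n → ℝ) :
    ∃ c c' : ℝ, c ≤ c' ∧
      {x : ℝ | ∀ x' : ℝ,
          (n : ℝ)⁻¹ * ∑ j, (legendre Φ (y j + x) - x) ≤
            (n : ℝ)⁻¹ * ∑ j, (legendre Φ (y j + x') - x')} = Set.Icc c c' := by
  have hne : (Finset.univ : Finset (Fin n)).Nonempty := ⟨⟨0, hn⟩, Finset.mem_univ _⟩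
  apply ConvexOn.exists_minimizers_eq_Icc
  · exact (ConvexOn.sum convex_univ fun j _ =>
      convexOn_legendre_add_sub hΦ.finite_zero hΦ.superlinear (y j)).smul (by positivity)
  · exact (tendsto_finset_sum_atTop hne fun j _ =>
      tendsto_legendre_add_sub_cocompact hΦ (y j)).const_mul_atTop (by positivity)
end
end
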